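/- arXiv:math/0501539 — 3 statements merged into one kernel-verified Lean document; each statement's English description precedes it below -/
import Mathlib

section
/- In any kei Q, the relation a = ((((b*a)*b)*a)*b) for all a,b implies ((a*b)*a) = ((b*a)*b) for all a,b, and conversely. -/
theorem kei_r5_iff {Q : Type*} (op : Q → Q → Q)
    (idem : ∀ a, op a a = a)
    (inv : ∀ a b, op (op a b) b = a)
    (dist : ∀ a b c, op (op a b) c = op (op a c) (op b c)) :
    (∀ a b : Q, op (op (op (op b a) b) a) b = a) ↔
      (∀ a b : Q, op (op a b) a = op (op b a) b) := by
  constructor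
  · intro h a b
    have h2 := congrArg (fun x => op x b) (h a b)
    simp only [inv] at h2
    rw [← h2, inv]
  · intro g a b
    rw [← g a b, inv, inv]
end

section
/- In a kei Q, the relation a = (b*a)*b holds for all a,b if and only if the operation * is commutative, i.e., a*b = b*a for all a,b. -/
theorem kei_r3_iff_comm {Q : Type*} (op : Q → Q → Q)
    (idem : ∀ a, op a a = a)
    (inv : ∀ a b, op (op a b) b = a)
    (dist : ∀ a b c, op (op a b) c = op (op a c) (op b c)) :
    (∀ a b : Q, op (op b a) b = a) ↔ (∀ a b : Q, op a b = op b a) := by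
  constructor
  · intro r3 a b
    have h : op (op a b) b = op (op b a) b := by rw [inv, r3]
    calc op a b = op (op (op a b) b) b := (inv _ _).symm
      _ = op (op (op b a) b) b := by rw [h]
      _ = op b a := inv _ _
  · intro comm a b
    rw [comm b a, inv]
end

section
/- In the quotient group B_3/(σ1⁵) of the 3-strand braid group by the normal closure of σ1⁵, the images of σ1⁻²σ2σ1⁻³σ2⁻²σ1σ2² and σ1³σ2σ1²σ2³σ1σ2² are equal; consequently the image of (σ1⁻²σ2)³ equals the image of (σ1σ2)⁶. -/
def braidRel : Set (FreeGroup (Fin 2)) :=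
  {FreeGroup.of 0 * FreeGroup.of 1 * FreeGroup.of 0 *
    (FreeGroup.of 1 * FreeGroup.of 0 * FreeGroup.of 1)⁻¹}

/-- The Artin braid group on 3 strands. -/
abbrev B3 := PresentedGroup braidRel

def σ1 : B3 := PresentedGroup.of 0
def σ2 : B3 := PresentedGroup.of 1

/-- The braid relation in `B3`. -/
lemma braid_rel : σ1 * σ2 * σ1 = σ2 * σ1 * σ2 := by
  have h : σ1 * σ2 * σ1 * (σ2 * σ1 * σ2)⁻¹ = 1 := by
    have : (FreeGroup.of 0 * FreeGroup.of 1 * FreeGroup.of 0 *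
        (FreeGroup.of 1 * FreeGroup.of 0 * FreeGroup.of 1)⁻¹ : FreeGroup (Fin 2)) ∈
        Subgroup.normalClosure braidRel :=
      Subgroup.subset_normalClosure rfl
    exact (QuotientGroup.eq_one_iff _).mpr this
  exact mul_inv_eq_one.mp h

/-- Key word identity: from the braid relation alone, `(a³b)³ = (ab)⁶`. -/
lemma key_identity {G : Type*} [Group G] (a b : G) (h : a * b * a = b * a * b) :
    (a ^ 3 * b) ^ 3 = (a * b) ^ 6 := by
  calc (a ^ 3 * b) ^ 3
      = a * a * (a * b * a) * (a * a * b) * (a * a * a * b) := by simp [pow_succ, mul_assoc]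
    _ = a * a * (b * a * b) * (a * a * b) * (a * a * a * b) := by rw [h]
    _ = a * a * b * a * b * a * (a * b * a) * (a * a * b) := by group
    _ = a * a * b * a * b * a * (b * a * b) * (a * a * b) := by rw [h]
    _ = a * (a * b * a) * (b * a * b * a * b * a * a * b) := by group
    _ = a * (b * a * b) * (b * a * b * a * b * a * a * b) := by rw [h]
    _ = a * b * a * b * (b * a * b) * (a * b * a * a * b) := by group
    _ = a * b * a * b * (a * b * a) * (a * b * a * a * b) := by rw [← h]
    _ = a * b * (a * b) * (a * b) * a * (a * b * a) * (a * b) := by group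
    _ = a * b * (a * b) * (a * b) * a * (b * a * b) * (a * b) := by rw [h]
    _ = (a * b) ^ 6 := by simp [pow_succ, mul_assoc]

theorem braid_quotient_identity_11 :
    let π := QuotientGroup.mk' (Subgroup.normalClosure ({σ1 ^ 5} : Set B3))
    π (σ1 ^ (-2 : ℤ) * σ2 * σ1 ^ (-3 : ℤ) * σ2 ^ (-2 : ℤ) * σ1 * σ2 ^ 2) =
      π (σ1 ^ 3 * σ2 * σ1 ^ 2 * σ2 ^ 3 * σ1 * σ2 ^ 2) ∧
    π ((σ1 ^ (-2 : ℤ) * σ2) ^ 3) = π ((σ1 * σ2) ^ 6) := by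
  intro π
  set a : _ := π σ1 with ha_def
  set b : _ := π σ2 with hb_def
  have hbr : a * b * a = b * a * b := by
    rw [ha_def, hb_def, ← map_mul, ← map_mul, ← map_mul, ← map_mul, braid_rel]
  have ha5 : a ^ 5 = 1 := by
    rw [ha_def, ← map_pow]
    exact (QuotientGroup.eq_one_iff _).mpr
      (Subgroup.subset_normalClosure rfl)
  have hb5 : b ^ 5 = 1 := by
    have hconj : b = (a * b) * a * (a * b)⁻¹ := by
      rw [mul_inv_rev]
      calc b = (b * a * b) * b⁻¹ * a⁻¹ * (a * b) * (a * b)⁻¹ * b * b⁻¹ := by group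
        _ = (a * b * a) * b⁻¹ * a⁻¹ * (a * b) * (a * b)⁻¹ * b * b⁻¹ := by rw [hbr]
        _ = a * b * a * (b⁻¹ * a⁻¹) := by group
    calc b ^ 5 = ((a * b) * a * (a * b)⁻¹) ^ 5 := by rw [← hconj]
      _ = (a * b) * a ^ 5 * (a * b)⁻¹ := by rw [conj_pow]
      _ = 1 := by rw [ha5]; group
  have hneg2 : a ^ (-2 : ℤ) = a ^ 3 := by
    have : a ^ (-2 : ℤ) * (a ^ 3)⁻¹ = (a ^ 5)⁻¹ := by group
    rw [ha5] at this
    simpa [mul_inv_eq_one] using this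
  have hneg3 : a ^ (-3 : ℤ) = a ^ 2 := by
    have : a ^ (-3 : ℤ) * (a ^ 2)⁻¹ = (a ^ 5)⁻¹ := by group
    rw [ha5] at this
    simpa [mul_inv_eq_one] using this
  have hbneg2 : b ^ (-2 : ℤ) = b ^ 3 := by
    have : b ^ (-2 : ℤ) * (b ^ 3)⁻¹ = (b ^ 5)⁻¹ := by group
    rw [hb5] at this
    simpa [mul_inv_eq_one] using this
  constructor
  · simp only [map_mul, map_pow, map_zpow, ← ha_def, ← hb_def]
    rw [hneg2, hneg3, hbneg2]
  · simp only [map_mul, map_pow, map_zpow, ← ha_def, ← hb_def]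
    rw [hneg2]
    exact key_identity a b hbr
end
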